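/- For x ∈ (−1,1) and the boundary values of powers of the inverse Joukowsky map, lim_{ε→0⁺} i·(J₊⁻¹(x+iε)^k − J₊⁻¹(x−iε)^k)/2 = U_{k−1}(x)·√(1−x²), where U_{k−1} is the Chebyshev polynomial of the second kind of degree k−1. -/

import Mathlib

open Complex Filter Polynomial

/-- The inverse Joukowsky map `J₊⁻¹(z) = z - √(z-1)√(z+1)`, principal branches. -/
noncomputable def Jinv (z : ℂ) : ℂ := z - (z - 1) ^ ((1 : ℂ) / 2) * (z + 1) ^ ((1 : ℂ) / 2)

/-!
Approached from the closed upper half-plane, the principal power `w ^ c` is continuous at every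
`w ≠ 0`, including the negative reals, where `arg w = π` is the limit from above. Hence for
`x = cos θ ∈ (-1, 1)` we get `J₊⁻¹(x + iε) → J₊⁻¹(x) = cos θ - i sin θ = e^{-iθ}`. Off the real
axis `J₊⁻¹` commutes with conjugation, so `J₊⁻¹(x - iε) → e^{iθ}`, and the limit is
`i (e^{-ikθ} - e^{ikθ}) / 2 = sin kθ = U_{k-1}(cos θ) sin θ`.
-/

open ComplexConjugate Topology
open scoped ComplexOrder

namespace Complex

theorem continuousWithinAt_cpow_const_of_im_nonneg {z : ℂ} (c : ℂ) (hz : z ≠ 0) :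
    ContinuousWithinAt (· ^ c) {w : ℂ | 0 ≤ w.im} z := by
  by_cases hslit : z ∈ slitPlane
  · exact (continuousAt_cpow_const hslit).continuousWithinAt
  obtain ⟨hre, him⟩ : z.re < 0 ∧ z.im = 0 := by
    rw [mem_slitPlane_iff, not_or, not_lt, not_ne_iff] at hslit
    exact ⟨hslit.1.lt_of_ne fun hre => hz (Complex.ext hre hslit.2), hslit.2⟩
  have hexp : ContinuousWithinAt (fun w => exp (log w * c)) {w : ℂ | 0 ≤ w.im} z :=
    continuous_exp.continuousAt.comp_continuousWithinAt
      ((continuousWithinAt_log_of_re_neg_of_im_zero hre him).mul continuousWithinAt_const)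
  exact hexp.congr_of_eventuallyEq (nhdsWithin_le_nhds (cpow_eq_nhds hz))
    (cpow_def_of_ne_zero hz c)

theorem ofReal_cpow_one_div_two {a : ℝ} (ha : 0 ≤ a) : (a : ℂ) ^ ((1 : ℂ) / 2) = √a := by
  rw [one_div, ← Complex.sqrt, sqrt_of_nonneg (mod_cast ha), ofReal_re]

theorem neg_ofReal_cpow_one_div_two {a : ℝ} (ha : 0 ≤ a) :
    (-a : ℂ) ^ ((1 : ℂ) / 2) = I * √a := by
  rw [one_div, ← Complex.sqrt, sqrt_neg_of_nonneg (mod_cast ha), sqrt_of_nonneg (mod_cast ha),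
    ofReal_re]

theorem I_mul_sub_conj_div_two (z : ℂ) : I * (z - conj z) / 2 = -z.im := by
  rw [sub_conj]
  push_cast
  ring_nf
  simp [I_sq]

theorem im_exp_neg_mul_I_pow (θ : ℝ) (k : ℕ) :
    (exp (-(θ * I)) ^ k).im = -Real.sin (k * θ) := by
  rw [← exp_nat_mul, show (k : ℂ) * -(θ * I) = ((-(k * θ) : ℝ) : ℂ) * I by push_cast; ring,
    exp_ofReal_mul_I_im, Real.sin_neg]

end Complex

theorem continuousWithinAt_jinv {z : ℂ} (h₁ : z ≠ 1) (h₂ : z ≠ -1) :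
    ContinuousWithinAt Jinv {w : ℂ | 0 ≤ w.im} z := by
  have hsqrt {a : ℂ} (ha : z + a ≠ 0) (hreal : a.im = 0) :
      ContinuousWithinAt (fun w => (w + a) ^ ((1 : ℂ) / 2)) {w : ℂ | 0 ≤ w.im} z :=
    (continuousWithinAt_cpow_const_of_im_nonneg _ ha).comp (f := (· + a))
      (continuous_add_const a).continuousWithinAt
      fun w hw => show 0 ≤ (w + a).im by simpa [hreal] using hw
  have hminus := hsqrt (a := -1) (by rwa [← sub_eq_add_neg, sub_ne_zero]) (by simp)
  have hplus := hsqrt (a := 1) (by rwa [ne_eq, add_eq_zero_iff_eq_neg]) (by simp)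
  simp only [← sub_eq_add_neg] at hminus
  exact continuousWithinAt_id.sub (hminus.mul hplus)

theorem tendsto_jinv_add_mul_I {z : ℂ} (hz : 0 ≤ z.im) (h₁ : z ≠ 1) (h₂ : z ≠ -1) :
    Tendsto (fun ε : ℝ => Jinv (z + ε * I)) (𝓝[>] 0) (𝓝 (Jinv z)) := by
  refine (continuousWithinAt_jinv h₁ h₂).tendsto.comp (tendsto_nhdsWithin_iff.2 ⟨?_, ?_⟩)
  · exact (Continuous.tendsto' (f := fun ε : ℝ => z + ε * I) (by fun_prop) 0 z
      (by simp)).mono_left nhdsWithin_le_nhds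
  · filter_upwards [self_mem_nhdsWithin] with ε (hε : 0 < ε)
    show 0 ≤ (z + ε * I).im
    simp only [add_im, mul_im, ofReal_re, I_im, ofReal_im, I_re]
    linarith

theorem jinv_conj {z : ℂ} (hz : z.im ≠ 0) : Jinv (conj z) = conj (Jinv z) := by
  have hsqrt (a : ℝ) : (conj z + a) ^ ((1 : ℂ) / 2) = conj ((z + a) ^ ((1 : ℂ) / 2)) := by
    rw [← conj_ofReal a, ← map_add,
      conj_cpow _ _ fun h => hz (by simpa using (arg_eq_pi_iff.1 h).2)]
    simp [map_ofNat]
  simpa [Jinv, sub_eq_add_neg] using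
    congrArg₂ (fun u v => conj z - u * v) (hsqrt (-1)) (hsqrt 1)

theorem tendsto_jinv_ofReal_sub_mul_I {x : ℝ} (h₁ : x ≠ 1) (h₂ : x ≠ -1) :
    Tendsto (fun ε : ℝ => Jinv (x - ε * I)) (𝓝[>] 0) (𝓝 (conj (Jinv x))) := by
  refine ((continuous_conj.tendsto _).comp
    (tendsto_jinv_add_mul_I (z := x) (by simp) (mod_cast h₁) (mod_cast h₂))).congr' ?_
  filter_upwards [self_mem_nhdsWithin] with ε (hε : 0 < ε)
  rw [Function.comp_apply, ← jinv_conj (by simpa using hε.ne'), map_add, conj_ofReal, map_mul,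
    conj_ofReal, conj_I, mul_neg, ← sub_eq_add_neg]

theorem jinv_cos {θ : ℝ} (hθ : θ ∈ Set.Icc 0 Real.pi) : Jinv (Real.cos θ) = exp (-(θ * I)) := by
  have hminus : 0 ≤ 1 - Real.cos θ := sub_nonneg.2 (Real.cos_le_one θ)
  have hplus : 0 ≤ 1 + Real.cos θ := by linarith [Real.neg_one_le_cos θ]
  have hsin : √(1 - Real.cos θ) * √(1 + Real.cos θ) = Real.sin θ := by
    rw [← Real.sqrt_mul hminus, ← Real.sqrt_sq (Real.sin_nonneg_of_mem_Icc hθ), Real.sin_sq]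
    ring_nf
  rw [Jinv, show (Real.cos θ : ℂ) - 1 = -((1 - Real.cos θ : ℝ) : ℂ) by push_cast; ring,
    show (Real.cos θ : ℂ) + 1 = ((1 + Real.cos θ : ℝ) : ℂ) by push_cast; ring,
    neg_ofReal_cpow_one_div_two hminus, ofReal_cpow_one_div_two hplus, ← neg_mul, exp_mul_I,
    ← ofReal_neg, ← ofReal_cos, ← ofReal_sin, Real.cos_neg, Real.sin_neg, ← hsin]
  push_cast
  ring

theorem jinv_pow_boundary_values_general (x : ℝ) (hx : x ∈ Set.Ioo (-1 : ℝ) 1) (k : ℕ) :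
    Tendsto
      (fun ε : ℝ =>
        Complex.I * ((Jinv ((x : ℂ) + ε * Complex.I)) ^ k -
          (Jinv ((x : ℂ) - ε * Complex.I)) ^ k) / 2)
      (nhdsWithin 0 (Set.Ioi 0))
      (nhds ((((Polynomial.Chebyshev.U ℝ ((k : ℤ) - 1)).eval x : ℝ) : ℂ) *
        (Real.sqrt (1 - x ^ 2) : ℂ))) := by
  have h₁ : x ≠ 1 := hx.2.ne
  have h₂ : x ≠ -1 := hx.1.ne'
  have hup := tendsto_jinv_add_mul_I (z := x) (by simp) (mod_cast h₁) (mod_cast h₂)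
  have hdown := tendsto_jinv_ofReal_sub_mul_I h₁ h₂
  convert (((hup.pow k).sub (hdown.pow k)).const_mul I).div_const 2 using 2
  set θ := Real.arccos x
  have hcos : Real.cos θ = x := Real.cos_arccos hx.1.le hx.2.le
  have hJ : Jinv x = exp (-(θ * I)) := by
    rw [← jinv_cos ⟨Real.arccos_nonneg x, Real.arccos_le_pi x⟩, hcos]
  have hU := Chebyshev.U_real_cos θ ((k : ℤ) - 1)
  rw [hcos, Real.sin_arccos] at hU
  rw [← map_pow, I_mul_sub_conj_div_two, hJ, im_exp_neg_mul_I_pow, ofReal_neg, neg_neg,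
    ← ofReal_mul, hU]
  push_cast
  ring_nf

/-- Boundary values of powers of the inverse Joukowsky map: for `x ∈ (-1,1)`,
`lim_{ε→0⁺} i (J₊⁻¹(x+iε)^k − J₊⁻¹(x−iε)^k)/2 = U_{k−1}(x) √(1−x²)`. -/
theorem jinv_pow_boundary_values (x : ℝ) (hx : x ∈ Set.Ioo (-1 : ℝ) 1) (k : ℕ) (hk : 1 ≤ k) :
    Tendsto
      (fun ε : ℝ =>
        Complex.I * ((Jinv ((x : ℂ) + ε * Complex.I)) ^ k -
          (Jinv ((x : ℂ) - ε * Complex.I)) ^ k) / 2)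
      (nhdsWithin 0 (Set.Ioi 0))
      (nhds ((((Polynomial.Chebyshev.U ℝ ((k : ℤ) - 1)).eval x : ℝ) : ℂ) *
        (Real.sqrt (1 - x ^ 2) : ℂ))) :=
  jinv_pow_boundary_values_general x hx k
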